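/- Let $1<p<N$, $0\le\mu<\bar\mu$, $A>0$ and $\alpha>p$. Then there exist constants $\delta,\epsilon\in(0,1)$ and $R_1>1$ depending only on $N,p,\mu,A,\alpha$ such that the function $v(x)=|x|^{-\gamma_2}(1-\delta|x|^{-\epsilon})$ is positive on $\{|x|>R_1\}$, belongs to $\mathcal{D}^{1,p}(B_{R_1}^c)$, and satisfies $-\Delta_p v-\frac{\mu}{|x|^p}v^{p-1}=g(x)v^{p-1}$ pointwise on $\{|x|>R_1\}$ for a function $g$ with $g(x)\ge A|x|^{-\alpha}$ for all $|x|>R_1$ and $g\in L^{N/p}(B_{R_1}^c)$. -/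

import Mathlib

open MeasureTheory

/-- The root equation `γ^(p-2)[(p-1)γ² - (N-p)γ] + μ = 0`. -/
def rootEq (N p μ γ : ℝ) : Prop :=
  γ ^ (p - 2) * ((p - 1) * γ ^ 2 - (N - p) * γ) + μ = 0

/-- The `p`-Laplacian `Δ_p v = div(|∇v|^(p-2) ∇v)`, written pointwise. -/
noncomputable def pLap (N : ℕ) (p : ℝ) (v : EuclideanSpace ℝ (Fin N) → ℝ)
    (x : EuclideanSpace ℝ (Fin N)) : ℝ :=
  ∑ i : Fin N,
    fderiv ℝ (fun y => (‖gradient v y‖ ^ (p - 2) • gradient v y) i) x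
      (EuclideanSpace.single i 1)

/-!
Write `r = ‖x‖`, `s = δ r^(-ε)` and `v = φ(r)` with `φ(r) = r^(-γ) (1 - s)`. Since
`φ'(r) = -r^(-γ-1) (γ - (γ + ε) s)` is negative for large `r`, the radial form of the
`p`-Laplacian gives
`-Δ_p v - μ r^(-p) v^(p-1) = r^(-p-γ(p-1)) H(s)`, where `H = supersolutionDefect`.
`H(0) = 0` is exactly the root equation for `γ`, and
`H'(0) = (p-1) γ^(p-2) ε (γ + ε - (N - p - (p-1)γ)) > 0` because `γ > (N-p)/p`.
Hence `g = r^(-p) H(s) / (1-s)^(p-1)` is comparable to `r^(-p-ε)` for large `r`: it dominates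
`A r^(-α)` once `ε < α - p`, and it lies in `L^(N/p)` outside a ball. The bounds
`v ≤ r^(-γ)` and `|∇v| ≲ r^(-γ-1)` give `v ∈ L^(p*)` and `∇v ∈ L^p` since `γ > (N-p)/p`.
Any `δ` works (we take `δ = 1/2`), because `s → 0` as `r → ∞`.
-/

open Filter Topology

section RadialCalculus

variable {E : Type*} [NormedAddCommGroup E] [InnerProductSpace ℝ E] [CompleteSpace E]

theorem hasGradientAt_norm {x : E} (hx : x ≠ 0) : HasGradientAt (‖·‖) (‖x‖⁻¹ • x) x := by
  have h := (hasStrictFDerivAt_norm_sq x).hasFDerivAt.sqrt (by positivity)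
  simp only [Real.sqrt_sq (norm_nonneg _)] at h
  rw [hasGradientAt_iff_hasFDerivAt]
  refine h.congr_fderiv (ContinuousLinearMap.ext fun y => ?_)
  simp only [one_div, mul_inv_rev, smul_apply, coe_innerSL_apply,
    nsmul_eq_mul, Nat.cast_ofNat, smul_eq_mul, map_smul, InnerProductSpace.toDual_apply_apply]
  field_simp

theorem HasDerivAt.hasGradientAt_comp_norm {φ : ℝ → ℝ} {φ' : ℝ} {x : E} (hφ : HasDerivAt φ φ' ‖x‖)
    (hx : x ≠ 0) : HasGradientAt (fun y => φ ‖y‖) ((φ' / ‖x‖) • x) x := by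
  have h := hφ.comp_hasFDerivAt x (hasGradientAt_iff_hasFDerivAt.1 (hasGradientAt_norm hx))
  rw [hasGradientAt_iff_hasFDerivAt]
  refine h.congr_fderiv (ContinuousLinearMap.ext fun y => ?_)
  simp [InnerProductSpace.toDual_apply_apply, div_eq_mul_inv, mul_assoc]

theorem sum_fderiv_radial_field {N : ℕ} {w : ℝ → ℝ} {w' : ℝ} {x : EuclideanSpace ℝ (Fin N)}
    (hx : x ≠ 0) (hw : HasDerivAt w w' ‖x‖) :
    ∑ i : Fin N, fderiv ℝ (fun y : EuclideanSpace ℝ (Fin N) => w ‖y‖ * y i) x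
      (EuclideanSpace.single i 1) = N * w ‖x‖ + ‖x‖ * w' := by
  have hr : 0 < ‖x‖ := norm_pos_iff.2 hx
  have hterm : ∀ i : Fin N, fderiv ℝ (fun y : EuclideanSpace ℝ (Fin N) => w ‖y‖ * y i) x
      (EuclideanSpace.single i 1) = w ‖x‖ + w' / ‖x‖ * (x i * x i) := by
    intro i
    have hw := hasGradientAt_iff_hasFDerivAt.1 (hw.hasGradientAt_comp_norm hx)
    have hi := (EuclideanSpace.proj (𝕜 := ℝ) (ι := Fin N) i).hasFDerivAt (x := x)
    have hwi : HasFDerivAt (fun y : EuclideanSpace ℝ (Fin N) => w ‖y‖ * y i) _ x := hw.mul hi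
    rw [hwi.fderiv]
    simp only [map_smul, add_apply, smul_apply,
      PiLp.proj_apply, PiLp.single_eq_same, smul_eq_mul, mul_one,
      InnerProductSpace.toDual_apply_apply, EuclideanSpace.inner_single_right, Real.ringHom_apply]
    ring
  have hsum : ∑ i : Fin N, x i * x i = ‖x‖ ^ 2 := by
    simp [EuclideanSpace.real_norm_sq_eq x, sq]
  simp only [hterm, Finset.sum_add_distrib, Finset.sum_const, Finset.card_univ, Fintype.card_fin,
    ← Finset.mul_sum, hsum, nsmul_eq_mul]
  field_simp

/-- For a radial `v = φ(‖y‖)` the field `|∇v|^(p-2) ∇v` is `w(‖y‖) y`, whose divergence is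
`N w + r w'`. -/
theorem pLap_comp_norm {N : ℕ} {p : ℝ} {φ φ' w : ℝ → ℝ} {w' : ℝ} {x : EuclideanSpace ℝ (Fin N)}
    (hx : x ≠ 0) (hφ : ∀ᶠ r in 𝓝 ‖x‖, HasDerivAt φ (φ' r) r)
    (hflux : ∀ᶠ r in 𝓝 ‖x‖, |φ' r| ^ (p - 2) * (φ' r / r) = w r) (hw : HasDerivAt w w' ‖x‖) :
    pLap N p (fun y => φ ‖y‖) x = N * w ‖x‖ + ‖x‖ * w' := by
  rw [pLap, ← sum_fderiv_radial_field hx hw]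
  refine Finset.sum_congr rfl fun i _ => ?_
  rw [Filter.EventuallyEq.fderiv_eq]
  filter_upwards [eventually_ne_nhds hx, (continuous_norm.tendsto x).eventually (hφ.and hflux)]
    with y hy ⟨hφy, hfluxy⟩
  have hr : 0 < ‖y‖ := norm_pos_iff.2 hy
  rw [(hφy.hasGradientAt_comp_norm hy).gradient, norm_smul, Real.norm_eq_abs, abs_div,
    abs_of_pos hr, div_mul_cancel₀ _ hr.ne', ← hfluxy]
  simp only [PiLp.smul_apply, smul_eq_mul]
  ring

end RadialCalculus

section Profile

variable {γ δ ε r : ℝ}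

theorem hasDerivAt_profile (hr : 0 < r) :
    HasDerivAt (fun r : ℝ => r ^ (-γ) * (1 - δ * r ^ (-ε)))
      (-(r ^ (-γ) / r * (γ - (γ + ε) * (δ * r ^ (-ε))))) r := by
  refine ((Real.hasDerivAt_rpow_const (Or.inl hr.ne')).mul
    (((Real.hasDerivAt_rpow_const (Or.inl hr.ne')).const_mul δ).const_sub 1)).congr_deriv ?_
  rw [Real.rpow_sub_one hr.ne', Real.rpow_sub_one hr.ne']
  ring

theorem hasDerivAt_profileFlux (p : ℝ) (hr : 0 < r) (hψ : 0 < γ - (γ + ε) * (δ * r ^ (-ε))) :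
    HasDerivAt (fun r : ℝ => -(r ^ (-p - γ * (p - 1)) * (γ - (γ + ε) * (δ * r ^ (-ε))) ^ (p - 1)))
      (-(r ^ (-p - γ * (p - 1)) / r *
        ((-p - γ * (p - 1)) * (γ - (γ + ε) * (δ * r ^ (-ε))) ^ (p - 1) +
          (p - 1) * (γ + ε) * ε * (δ * r ^ (-ε)) * (γ - (γ + ε) * (δ * r ^ (-ε))) ^ (p - 2)))) r := by
  have hψ' : HasDerivAt (fun r : ℝ => γ - (γ + ε) * (δ * r ^ (-ε)))
      (-((γ + ε) * (δ * (-ε * r ^ (-ε - 1))))) r :=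
    (((Real.hasDerivAt_rpow_const (Or.inl hr.ne')).const_mul δ).const_mul _).const_sub γ
  refine ((Real.hasDerivAt_rpow_const (Or.inl hr.ne')).mul
    (hψ'.rpow_const (p := p - 1) (Or.inl hψ.ne'))).neg.congr_deriv ?_
  rw [Real.rpow_sub_one hr.ne', Real.rpow_sub_one hr.ne', show p - 1 - 1 = p - 2 by ring]
  ring

theorem profileFlux_eq (p : ℝ) {c : ℝ} (hr : 0 < r) (hc : 0 < c) :
    |-(r ^ (-γ) / r * c)| ^ (p - 2) * (-(r ^ (-γ) / r * c) / r)
      = -(r ^ (-p - γ * (p - 1)) * c ^ (p - 1)) := by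
  have ha : 0 < r ^ (-γ) / r := by positivity
  have hpow : (r ^ (-γ) / r * c) ^ (p - 2) * (r ^ (-γ) / r * c) = (r ^ (-γ) / r * c) ^ (p - 1) := by
    rw [← Real.rpow_add_one (by positivity)]
    ring_nf
  have hr' : (r ^ (-γ) / r) ^ (p - 1) / r = r ^ (-p - γ * (p - 1)) := by
    rw [← Real.rpow_sub_one hr.ne', ← Real.rpow_mul hr.le, ← Real.rpow_sub_one hr.ne']
    ring_nf
  rw [abs_neg, abs_of_pos (by positivity), mul_div_assoc', mul_neg, hpow,
    Real.mul_rpow ha.le hc.le, ← hr']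
  ring

end Profile

noncomputable def supersolutionDefect (N p μ γ ε s : ℝ) : ℝ :=
  (γ - (γ + ε) * s) ^ (p - 2) * ((N - p - (p - 1) * γ) * (γ - (γ + ε) * s)
    + (p - 1) * (γ + ε) * ε * s) - μ * (1 - s) ^ (p - 1)

noncomputable def profilePotential (N p μ γ δ ε r : ℝ) : ℝ :=
  r ^ (-p) * supersolutionDefect N p μ γ ε (δ * r ^ (-ε)) / (1 - δ * r ^ (-ε)) ^ (p - 1)

theorem pLap_profile {N : ℕ} {p μ γ δ ε : ℝ} {x : EuclideanSpace ℝ (Fin N)} (hγ : 0 ≤ γ)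
    (hε : 0 ≤ ε) (hx : x ≠ 0) (hψ : 0 < γ - (γ + ε) * (δ * ‖x‖ ^ (-ε))) :
    -pLap N p (fun y => ‖y‖ ^ (-γ) * (1 - δ * ‖y‖ ^ (-ε))) x
        - μ / ‖x‖ ^ p * (‖x‖ ^ (-γ) * (1 - δ * ‖x‖ ^ (-ε))) ^ (p - 1)
      = profilePotential N p μ γ δ ε ‖x‖ * (‖x‖ ^ (-γ) * (1 - δ * ‖x‖ ^ (-ε))) ^ (p - 1) := by
  have hr : 0 < ‖x‖ := norm_pos_iff.2 hx
  have hψc : ContinuousAt (fun r : ℝ => γ - (γ + ε) * (δ * r ^ (-ε))) ‖x‖ :=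
    continuousAt_const.sub (continuousAt_const.mul
      (continuousAt_const.mul (Real.continuousAt_rpow_const _ _ (Or.inl hr.ne'))))
  have hev : ∀ᶠ r in 𝓝 ‖x‖, 0 < r ∧ 0 < γ - (γ + ε) * (δ * r ^ (-ε)) :=
    (eventually_gt_nhds hr).and (hψc.eventually (eventually_gt_nhds hψ))
  rw [pLap_comp_norm hx (hev.mono fun r hr => hasDerivAt_profile hr.1)
    (hev.mono fun r hr => profileFlux_eq p hr.1 hr.2) (hasDerivAt_profileFlux p hr hψ)]
  set s := δ * ‖x‖ ^ (-ε)
  set ψ := γ - (γ + ε) * s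
  have hs : 0 < 1 - s := by nlinarith
  have hψpow : ψ ^ (p - 1) = ψ ^ (p - 2) * ψ := by
    rw [← Real.rpow_add_one hψ.ne']; ring_nf
  have hvpow : μ / ‖x‖ ^ p * (‖x‖ ^ (-γ) * (1 - s)) ^ (p - 1)
      = ‖x‖ ^ (-p - γ * (p - 1)) * (μ * (1 - s) ^ (p - 1)) := by
    rw [Real.mul_rpow (by positivity) hs.le, ← Real.rpow_mul hr.le,
      show -p - γ * (p - 1) = -γ * (p - 1) + -p by ring, Real.rpow_add hr, Real.rpow_neg hr.le]
    ring
  have hpot : profilePotential N p μ γ δ ε ‖x‖ * (‖x‖ ^ (-γ) * (1 - s)) ^ (p - 1)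
      = ‖x‖ ^ (-p - γ * (p - 1)) * supersolutionDefect N p μ γ ε s := by
    rw [profilePotential, Real.mul_rpow (by positivity) hs.le, ← Real.rpow_mul hr.le,
      show -p - γ * (p - 1) = -p + -γ * (p - 1) by ring, Real.rpow_add hr]
    field_simp
    exact mul_div_cancel_right₀ _ (Real.rpow_pos_of_pos hs _).ne'
  rw [hvpow, hpot, supersolutionDefect, hψpow]
  field_simp
  ring

theorem HasDerivAt.eventually_nhdsGT_linear_bounds {f : ℝ → ℝ} {d : ℝ} (hf : HasDerivAt f d 0)
    (h0 : f 0 = 0) (hd : 0 < d) : ∀ᶠ s in 𝓝[>] 0, d / 2 * s ≤ f s ∧ f s ≤ 2 * d * s := by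
  have ho := (hasDerivAt_iff_isLittleO.1 hf).def (half_pos hd)
  filter_upwards [nhdsWithin_le_nhds ho, self_mem_nhdsWithin] with s hs (hs0 : 0 < s)
  simp only [h0, sub_zero, smul_eq_mul, Real.norm_eq_abs, abs_of_pos hs0] at hs
  constructor <;> nlinarith [abs_le.1 hs]

section Defect

variable {N p μ γ ε : ℝ}

theorem supersolutionDefect_zero (hroot : rootEq N p μ γ) :
    supersolutionDefect N p μ γ ε 0 = 0 := by
  rw [rootEq] at hroot
  simp only [supersolutionDefect, mul_zero, sub_zero, add_zero, Real.one_rpow, mul_one]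
  linear_combination -hroot

theorem hasDerivAt_supersolutionDefect_zero (hγ : 0 < γ) (hroot : rootEq N p μ γ) :
    HasDerivAt (supersolutionDefect N p μ γ ε)
      ((p - 1) * γ ^ (p - 2) * ε * (γ + ε - (N - p - (p - 1) * γ))) 0 := by
  have hψ : HasDerivAt (fun s : ℝ => γ - (γ + ε) * s) (-(γ + ε)) 0 := by
    simpa using ((hasDerivAt_id (0 : ℝ)).const_mul (γ + ε)).const_sub γ
  have h1s : HasDerivAt (fun s : ℝ => 1 - s) (-1) 0 := by
    simpa using (hasDerivAt_id (0 : ℝ)).const_sub 1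
  have hpow := hψ.rpow_const (p := p - 2) (Or.inl (by simpa using hγ.ne'))
  have hlin := (hψ.const_mul (N - p - (p - 1) * γ)).add
    ((hasDerivAt_id (0 : ℝ)).const_mul ((p - 1) * (γ + ε) * ε))
  have hμ := (h1s.rpow_const (p := p - 1) (Or.inl (by norm_num))).const_mul μ
  refine ((hpow.mul hlin).sub hμ).congr_deriv ?_
  have hγpow : γ ^ (p - 2 - 1) * γ = γ ^ (p - 2) := by
    rw [← Real.rpow_add_one hγ.ne']; ring_nf
  simp only [rootEq, Pi.add_apply, id, mul_zero, sub_zero, add_zero, Real.one_rpow,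
    mul_one] at hroot ⊢
  linear_combination (p - 1) * hroot - (p - 2) * (N - p - (p - 1) * γ) * (γ + ε) * hγpow

theorem eventually_supersolutionDefect_bounds (hp : 1 < p) (hγ : 0 < γ) (hε : 0 < ε)
    (hroot : rootEq N p μ γ) (hK : N - p - (p - 1) * γ < γ) :
    ∃ c > 0, ∀ᶠ s in 𝓝[>] 0,
      c * s ≤ supersolutionDefect N p μ γ ε s ∧ supersolutionDefect N p μ γ ε s ≤ 4 * c * s := by
  have hd : 0 < (p - 1) * γ ^ (p - 2) * ε * (γ + ε - (N - p - (p - 1) * γ)) :=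
    mul_pos (mul_pos (mul_pos (by linarith) (by positivity)) hε) (by linarith)
  refine ⟨_, half_pos hd, ?_⟩
  filter_upwards [(hasDerivAt_supersolutionDefect_zero hγ hroot).eventually_nhdsGT_linear_bounds
    (supersolutionDefect_zero hroot) hd] with s hs
  exact ⟨hs.1, by linarith [hs.2]⟩

end Defect

theorem profilePotential_bounds {N p μ γ δ ε r c : ℝ} (hp : 1 < p) (hr : 0 < r) (hc : 0 < c)
    (hs : 0 < δ * r ^ (-ε)) (hs2 : δ * r ^ (-ε) ≤ 1 / 2)
    (hlow : c * (δ * r ^ (-ε)) ≤ supersolutionDefect N p μ γ ε (δ * r ^ (-ε)))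
    (hup : supersolutionDefect N p μ γ ε (δ * r ^ (-ε)) ≤ 4 * c * (δ * r ^ (-ε))) :
    c * δ * r ^ (-(p + ε)) ≤ profilePotential N p μ γ δ ε r ∧
      profilePotential N p μ γ δ ε r ≤ 2 ^ (p + 1) * c * δ * r ^ (-(p + ε)) := by
  rw [profilePotential, neg_add, Real.rpow_add hr]
  set s := δ * r ^ (-ε)
  set H := supersolutionDefect N p μ γ ε s
  have hw : 0 < (1 - s) ^ (p - 1) := Real.rpow_pos_of_pos (by linarith) _
  have hw1 : (1 - s) ^ (p - 1) ≤ 1 := Real.rpow_le_one (by linarith) (by linarith) (by linarith)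
  have hw2 : 2⁻¹ ^ (p - 1) ≤ (1 - s) ^ (p - 1) :=
    Real.rpow_le_rpow (by norm_num) (by linarith) (by linarith)
  rw [Real.inv_rpow zero_le_two, inv_le_iff_one_le_mul₀ (by positivity)] at hw2
  have hrp : 0 < r ^ (-p) := Real.rpow_pos_of_pos hr _
  have hcs : 0 < r ^ (-p) * (c * s) := by positivity
  have h2p : (2 : ℝ) ^ (p + 1) = 4 * 2 ^ (p - 1) := by
    rw [show p + 1 = p - 1 + 2 by ring, Real.rpow_add two_pos]; norm_num; ring
  rw [le_div_iff₀ hw, div_le_iff₀ hw, h2p]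
  constructor
  · calc c * δ * (r ^ (-p) * r ^ (-ε)) * (1 - s) ^ (p - 1) ≤ r ^ (-p) * (c * s) := by
          nlinarith
      _ ≤ r ^ (-p) * H := mul_le_mul_of_nonneg_left hlow hrp.le
  · calc r ^ (-p) * H ≤ r ^ (-p) * (4 * c * s) := mul_le_mul_of_nonneg_left hup hrp.le
      _ ≤ _ := by nlinarith

theorem eventually_profilePotential_bounds {N p μ γ δ ε α : ℝ} (hp : 1 < p) (hγ : 0 < γ)
    (hε : 0 < ε) (hδ : 0 < δ) (hroot : rootEq N p μ γ) (hK : N - p - (p - 1) * γ < γ)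
    (hα : p + ε < α) (A : ℝ) :
    ∃ C, ∀ᶠ r in atTop, A * r ^ (-α) ≤ profilePotential N p μ γ δ ε r ∧
      ‖profilePotential N p μ γ δ ε r‖ ≤ C * r ^ (-(p + ε)) := by
  obtain ⟨c, hc, hH⟩ := eventually_supersolutionDefect_bounds hp hγ hε hroot hK
  have hs : Tendsto (fun r : ℝ => δ * r ^ (-ε)) atTop (𝓝[>] 0) :=
    tendsto_nhdsWithin_iff.2 ⟨by simpa using (tendsto_rpow_neg_atTop hε).const_mul δ,
      (eventually_gt_atTop 0).mono fun r hr => mul_pos hδ (Real.rpow_pos_of_pos hr _)⟩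
  have hA : ∀ᶠ r in atTop, A ≤ c * δ * r ^ (α - (p + ε)) :=
    ((tendsto_rpow_atTop (by linarith)).const_mul_atTop (by positivity)).eventually_ge_atTop A
  refine ⟨2 ^ (p + 1) * c * δ, ?_⟩
  filter_upwards [eventually_gt_atTop 0, hs.eventually hH, hA,
    hs.eventually (nhdsWithin_le_nhds (eventually_le_nhds one_half_pos)),
    hs.eventually self_mem_nhdsWithin] with r hr hHr hAr hs2 (hs0 : 0 < δ * r ^ (-ε))
  obtain ⟨hlow, hup⟩ := profilePotential_bounds hp hr hc hs0 hs2 hHr.1 hHr.2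
  have hpot : 0 < profilePotential N p μ γ δ ε r := lt_of_lt_of_le (by positivity) hlow
  refine ⟨le_trans ?_ hlow, by rwa [Real.norm_of_nonneg hpot.le]⟩
  calc A * r ^ (-α) ≤ c * δ * r ^ (α - (p + ε)) * r ^ (-α) :=
        mul_le_mul_of_nonneg_right hAr (by positivity)
    _ = c * δ * r ^ (-(p + ε)) := by
        rw [mul_assoc, ← Real.rpow_add hr]; ring_nf

theorem eventually_profile_factors_pos {γ δ ε : ℝ} (hγ : 0 < γ) (hε : 0 < ε) :
    ∀ᶠ r in atTop, 0 < 1 - δ * r ^ (-ε) ∧ 0 < γ - (γ + ε) * (δ * r ^ (-ε)) := by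
  have hs : Tendsto (fun r : ℝ => δ * r ^ (-ε)) atTop (𝓝 0) := by
    simpa using (tendsto_rpow_neg_atTop hε).const_mul δ
  exact ((hs.const_sub 1).eventually_const_lt (by simp)).and
    (((hs.const_mul (γ + ε)).const_sub γ).eventually_const_lt (by simpa using hγ))

theorem rpow_neg_le_two_rpow_mul_one_add_rpow_neg {r c : ℝ} (hr : 1 ≤ r) (hc : 0 ≤ c) :
    r ^ (-c) ≤ 2 ^ c * (1 + r) ^ (-c) := by
  have hr0 : 0 < r := by linarith
  calc r ^ (-c) = 2 ^ c * (2 * r) ^ (-c) := by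
        rw [Real.mul_rpow (by norm_num) hr0.le, Real.rpow_neg (by norm_num : (0 : ℝ) ≤ 2)]
        field_simp
    _ ≤ 2 ^ c * (1 + r) ^ (-c) :=
        mul_le_mul_of_nonneg_left (Real.rpow_le_rpow_of_nonpos (by linarith) (by linarith)
          (by linarith)) (by positivity)

theorem memLp_restrict_of_norm_le_rpow_neg {E F : Type*} [NormedAddCommGroup E] [NormedSpace ℝ E]
    [FiniteDimensional ℝ E] [MeasurableSpace E] [BorelSpace E] {μ : Measure E} [μ.IsAddHaarMeasure]
    [NormedAddCommGroup F] {S : Set E} (hS : MeasurableSet S) (hS1 : ∀ x ∈ S, 1 ≤ ‖x‖) {f : E → F}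
    (hf : AEStronglyMeasurable f (μ.restrict S)) {q s C : ℝ} (hq : 0 < q)
    (hs : Module.finrank ℝ E < s * q) (hb : ∀ x ∈ S, ‖f x‖ ≤ C * ‖x‖ ^ (-s)) :
    MemLp f (ENNReal.ofReal q) (μ.restrict S) := by
  have hs0 : 0 ≤ s := by
    by_contra! h
    have : s * q < 0 := mul_neg_of_neg_of_pos h hq
    linarith [(Nat.cast_nonneg _ : (0 : ℝ) ≤ Module.finrank ℝ E)]
  have hq0 : ENNReal.ofReal q ≠ 0 := by simpa using hq
  have hweight : MemLp (fun x : E => (1 + ‖x‖) ^ (-s)) (ENNReal.ofReal q) μ := by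
    have hmeas : Measurable fun x : E => (1 + ‖x‖) ^ (-s) := by fun_prop
    refine (memLp_norm_rpow_iff hmeas.aestronglyMeasurable hq0 ENNReal.ofReal_ne_top).1 ?_
    rw [ENNReal.div_self hq0 ENNReal.ofReal_ne_top, memLp_one_iff_integrable]
    refine (integrable_one_add_norm (μ := μ) hs).congr (ae_of_all _ fun x => ?_)
    dsimp only
    rw [Real.norm_of_nonneg (by positivity), ENNReal.toReal_ofReal hq.le,
      ← Real.rpow_mul (by positivity)]
    ring_nf
  refine ((hweight.const_mul (C * 2 ^ s)).restrict S).mono' hf ?_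
  rw [ae_restrict_iff' hS]
  refine ae_of_all _ fun x hx => (hb x hx).trans ?_
  have hC : 0 ≤ C :=
    nonneg_of_mul_nonneg_left ((norm_nonneg _).trans (hb x hx))
      (Real.rpow_pos_of_pos (by linarith [hS1 x hx]) _)
  calc C * ‖x‖ ^ (-s) ≤ C * (2 ^ s * (1 + ‖x‖) ^ (-s)) :=
        mul_le_mul_of_nonneg_left (rpow_neg_le_two_rpow_mul_one_add_rpow_neg (hS1 x hx) hs0) hC
    _ = C * 2 ^ s * (1 + ‖x‖) ^ (-s) := by ring

theorem measurable_gradient {E : Type*} [NormedAddCommGroup E] [InnerProductSpace ℝ E]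
    [CompleteSpace E] [MeasurableSpace E] [BorelSpace E] (f : E → ℝ) :
    Measurable (gradient f) :=
  (InnerProductSpace.toDual ℝ E).symm.continuous.measurable.comp (measurable_fderiv ℝ f)

theorem memLp_profile {N : ℕ} {p γ δ ε R : ℝ} (hp : 0 < p) (hpN : p < N) (hγ : (N - p) / p < γ)
    (hδ : 0 ≤ δ) (hδ1 : δ ≤ 1) (hε : 0 ≤ ε) (hR : 1 ≤ R) :
    MemLp (fun x : EuclideanSpace ℝ (Fin N) => ‖x‖ ^ (-γ) * (1 - δ * ‖x‖ ^ (-ε)))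
      (ENNReal.ofReal (N * p / (N - p))) (volume.restrict {x | R < ‖x‖}) := by
  refine memLp_restrict_of_norm_le_rpow_neg (measurableSet_lt measurable_const measurable_norm)
    (fun x hx => hR.trans (le_of_lt hx)) (by fun_prop : Measurable _).aestronglyMeasurable
    (s := γ) (C := 1) (div_pos (mul_pos (by linarith) hp) (by linarith)) ?_ fun x hx => ?_
  · rw [finrank_euclideanSpace_fin, mul_div_assoc', lt_div_iff₀ (by linarith)]
    rw [div_lt_iff₀ hp] at hγ
    nlinarith
  · have hx1 : 1 ≤ ‖x‖ := hR.trans (le_of_lt hx)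
    have hs1 : ‖x‖ ^ (-ε) ≤ 1 := Real.rpow_le_one_of_one_le_of_nonpos hx1 (by linarith)
    have hs0 : 0 ≤ ‖x‖ ^ (-ε) := by positivity
    rw [norm_mul, Real.norm_of_nonneg (by positivity), Real.norm_of_nonneg (by nlinarith)]
    have hv : 0 < ‖x‖ ^ (-γ) := Real.rpow_pos_of_pos (by linarith) _
    nlinarith [mul_nonneg hδ hs0]

theorem memLp_gradient_profile {N : ℕ} {p γ δ ε R : ℝ} (hp : 0 < p) (hγ : (N - p) / p < γ)
    (hδ : 0 ≤ δ) (hε : 0 ≤ ε) (hR : 1 ≤ R) :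
    MemLp (fun x : EuclideanSpace ℝ (Fin N) =>
        ‖gradient (fun y : EuclideanSpace ℝ (Fin N) => ‖y‖ ^ (-γ) * (1 - δ * ‖y‖ ^ (-ε))) x‖)
      (ENNReal.ofReal p) (volume.restrict {x | R < ‖x‖}) := by
  refine memLp_restrict_of_norm_le_rpow_neg (measurableSet_lt measurable_const measurable_norm)
    (fun x hx => hR.trans (le_of_lt hx)) (measurable_gradient _).norm.aestronglyMeasurable
    (s := γ + 1) (C := |γ| + |γ + ε| * δ) hp ?_ fun x hx => ?_
  · rw [finrank_euclideanSpace_fin]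
    rw [div_lt_iff₀ hp] at hγ
    linarith
  · have hr : 0 < ‖x‖ := by linarith [hR.trans (le_of_lt hx)]
    have hs1 : ‖x‖ ^ (-ε) ≤ 1 :=
      Real.rpow_le_one_of_one_le_of_nonpos (hR.trans (le_of_lt hx)) (by linarith)
    have hs0 : 0 ≤ ‖x‖ ^ (-ε) := by positivity
    have hψ : |γ - (γ + ε) * (δ * ‖x‖ ^ (-ε))| ≤ |γ| + |γ + ε| * δ := by
      refine (abs_sub _ _).trans (add_le_add_right ?_ _)
      rw [abs_mul, abs_of_nonneg (by positivity : 0 ≤ δ * ‖x‖ ^ (-ε))]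
      exact mul_le_mul_of_nonneg_left (by nlinarith) (abs_nonneg _)
    rw [norm_norm, ((hasDerivAt_profile hr).hasGradientAt_comp_norm (norm_pos_iff.1 hr)).gradient,
      norm_smul, Real.norm_eq_abs, abs_div, abs_of_pos hr, div_mul_cancel₀ _ hr.ne', abs_neg,
      abs_mul, abs_of_pos (by positivity : 0 < ‖x‖ ^ (-γ) / ‖x‖), neg_add,
      Real.rpow_add hr, Real.rpow_neg_one, ← div_eq_mul_inv, mul_comm]
    exact mul_le_mul_of_nonneg_right hψ (by positivity)

theorem supersolution_near_infinity_general (N : ℕ) (p μ A α γ₂ : ℝ)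
    (hp : 1 < p) (hpN : p < (N : ℝ))
    (hγ₂ : rootEq N p μ γ₂) (hγ₂gt : ((N : ℝ) - p) / p < γ₂)
    (hα : p < α) :
    ∃ δ ε R₁ : ℝ, ∃ g : EuclideanSpace ℝ (Fin N) → ℝ,
      0 < δ ∧ δ < 1 ∧ 0 < ε ∧ ε < 1 ∧ 1 < R₁ ∧
      (∀ x : EuclideanSpace ℝ (Fin N), R₁ < ‖x‖ →
        0 < ‖x‖ ^ (-γ₂) * (1 - δ * ‖x‖ ^ (-ε))) ∧
      MemLp (fun x : EuclideanSpace ℝ (Fin N) => ‖x‖ ^ (-γ₂) * (1 - δ * ‖x‖ ^ (-ε)))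
        (ENNReal.ofReal ((N : ℝ) * p / ((N : ℝ) - p)))
        (volume.restrict {x : EuclideanSpace ℝ (Fin N) | R₁ < ‖x‖}) ∧
      MemLp (fun x : EuclideanSpace ℝ (Fin N) =>
          ‖gradient (fun y : EuclideanSpace ℝ (Fin N) =>
            ‖y‖ ^ (-γ₂) * (1 - δ * ‖y‖ ^ (-ε))) x‖)
        (ENNReal.ofReal p)
        (volume.restrict {x : EuclideanSpace ℝ (Fin N) | R₁ < ‖x‖}) ∧
      (∀ x : EuclideanSpace ℝ (Fin N), R₁ < ‖x‖ →
        -pLap N p (fun y : EuclideanSpace ℝ (Fin N) =>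
              ‖y‖ ^ (-γ₂) * (1 - δ * ‖y‖ ^ (-ε))) x -
            μ / ‖x‖ ^ p * (‖x‖ ^ (-γ₂) * (1 - δ * ‖x‖ ^ (-ε))) ^ (p - 1) =
          g x * (‖x‖ ^ (-γ₂) * (1 - δ * ‖x‖ ^ (-ε))) ^ (p - 1)) ∧
      (∀ x : EuclideanSpace ℝ (Fin N), R₁ < ‖x‖ → A * ‖x‖ ^ (-α) ≤ g x) ∧
      MemLp g (ENNReal.ofReal ((N : ℝ) / p))
        (volume.restrict {x : EuclideanSpace ℝ (Fin N) | R₁ < ‖x‖}) := by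
  have hp0 : 0 < p := by linarith
  have hγ : 0 < γ₂ := (div_pos (by linarith) hp0).trans hγ₂gt
  have hK : (N : ℝ) - p - (p - 1) * γ₂ < γ₂ := by
    rw [div_lt_iff₀ hp0] at hγ₂gt
    linarith
  obtain ⟨ε, hε, hε1, hεα⟩ : ∃ ε : ℝ, 0 < ε ∧ ε < 1 ∧ p + ε < α :=
    ⟨min 1 (α - p) / 2, half_pos (lt_min one_pos (by linarith)),
      by linarith [min_le_left 1 (α - p)], by linarith [min_le_right 1 (α - p)]⟩
  obtain ⟨C, hC⟩ := eventually_profilePotential_bounds hp hγ hε one_half_pos hγ₂ hK hεα A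
  obtain ⟨R, hR⟩ := eventually_atTop.1 ((eventually_profile_factors_pos hγ hε).and hC)
  set R₁ := max R 2
  have hR₁ : 1 < R₁ := lt_max_of_lt_right one_lt_two
  have hgood (x : EuclideanSpace ℝ (Fin N)) (hx : R₁ < ‖x‖) :=
    hR ‖x‖ ((le_max_left R 2).trans hx.le)
  refine ⟨1 / 2, ε, R₁, fun x => profilePotential N p μ γ₂ (1 / 2) ε ‖x‖, one_half_pos,
    one_half_lt_one, hε, hε1, hR₁, fun x hx => ?_,
    memLp_profile hp0 hpN hγ₂gt (by norm_num) (by norm_num) hε.le hR₁.le,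
    memLp_gradient_profile hp0 hγ₂gt (by norm_num) hε.le hR₁.le,
    fun x hx => pLap_profile hγ.le hε.le (norm_pos_iff.1 (by linarith)) (hgood x hx).1.2,
    fun x hx => (hgood x hx).2.1, ?_⟩
  · exact mul_pos (Real.rpow_pos_of_pos (by linarith) _) (hgood x hx).1.1
  · refine memLp_restrict_of_norm_le_rpow_neg (measurableSet_lt measurable_const measurable_norm)
      (fun x hx => by linarith [show R₁ < ‖x‖ from hx])
      (by unfold profilePotential supersolutionDefect; fun_prop : Measurable _).aestronglyMeasurable
      (s := p + ε) (C := C) (div_pos (by linarith) hp0) ?_ fun x hx => (hgood x hx).2.2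
    rw [finrank_euclideanSpace_fin, mul_div_assoc', lt_div_iff₀ hp0]
    nlinarith

theorem supersolution_near_infinity (N : ℕ) (hN : 2 ≤ N) (p μ A α γ₂ : ℝ)
    (hp : 1 < p) (hpN : p < (N : ℝ)) (hμ0 : 0 ≤ μ) (hμ : μ < (((N : ℝ) - p) / p) ^ p)
    (hγ₂ : rootEq N p μ γ₂) (hγ₂gt : ((N : ℝ) - p) / p < γ₂)
    (hγ₂le : γ₂ ≤ ((N : ℝ) - p) / (p - 1))
    (hA : 0 < A) (hα : p < α) :
    ∃ δ ε R₁ : ℝ, ∃ g : EuclideanSpace ℝ (Fin N) → ℝ,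
      0 < δ ∧ δ < 1 ∧ 0 < ε ∧ ε < 1 ∧ 1 < R₁ ∧
      (∀ x : EuclideanSpace ℝ (Fin N), R₁ < ‖x‖ →
        0 < ‖x‖ ^ (-γ₂) * (1 - δ * ‖x‖ ^ (-ε))) ∧
      MemLp (fun x : EuclideanSpace ℝ (Fin N) => ‖x‖ ^ (-γ₂) * (1 - δ * ‖x‖ ^ (-ε)))
        (ENNReal.ofReal ((N : ℝ) * p / ((N : ℝ) - p)))
        (volume.restrict {x : EuclideanSpace ℝ (Fin N) | R₁ < ‖x‖}) ∧
      MemLp (fun x : EuclideanSpace ℝ (Fin N) =>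
          ‖gradient (fun y : EuclideanSpace ℝ (Fin N) =>
            ‖y‖ ^ (-γ₂) * (1 - δ * ‖y‖ ^ (-ε))) x‖)
        (ENNReal.ofReal p)
        (volume.restrict {x : EuclideanSpace ℝ (Fin N) | R₁ < ‖x‖}) ∧
      (∀ x : EuclideanSpace ℝ (Fin N), R₁ < ‖x‖ →
        -pLap N p (fun y : EuclideanSpace ℝ (Fin N) =>
              ‖y‖ ^ (-γ₂) * (1 - δ * ‖y‖ ^ (-ε))) x -
            μ / ‖x‖ ^ p * (‖x‖ ^ (-γ₂) * (1 - δ * ‖x‖ ^ (-ε))) ^ (p - 1) =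
          g x * (‖x‖ ^ (-γ₂) * (1 - δ * ‖x‖ ^ (-ε))) ^ (p - 1)) ∧
      (∀ x : EuclideanSpace ℝ (Fin N), R₁ < ‖x‖ → A * ‖x‖ ^ (-α) ≤ g x) ∧
      MemLp g (ENNReal.ofReal ((N : ℝ) / p))
        (volume.restrict {x : EuclideanSpace ℝ (Fin N) | R₁ < ‖x‖}) :=
  supersolution_near_infinity_general N p μ A α γ₂ hp hpN hγ₂ hγ₂gt hα
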